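/- arXiv:2410.10753 — 2 statements merged into one kernel-verified Lean document; each statement's English description precedes it below -/
import Mathlib

section
/- Let n ≥ 1 be an integer and let ℓ be an integer with 0 ≤ ℓ ≤ n+1. Then Σ_{j=0}^{n} (−1)^j C(n,j)·C(−j, ℓ) equals 1 if ℓ = n, equals −n if ℓ = n+1, and equals 0 otherwise, where C(−j,ℓ) = (−1)^ℓ C(j+ℓ−1, ℓ) is the generalized binomial coefficient at the negative integer −j. -/
open Finset

lemma aux_U (n : ℕ) : ∀ m ℓ : ℕ,
    ∑ i ∈ range (n + 1), (-1 : ℤ) ^ i * (n.choose i : ℤ) * ((i + m).choose ℓ : ℤ)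
      = if n ≤ ℓ then (-1 : ℤ) ^ n * (m.choose (ℓ - n) : ℤ) else 0 := by
  induction n with
  | zero =>
      intro m ℓ
      simp
  | succ n ih =>
      intro m ℓ
      set F : ℕ → ℤ := fun i => (-1 : ℤ) ^ i * ((n+1).choose i : ℤ) * ((i + m).choose ℓ : ℤ)
        with hF
      set f : ℕ → ℤ := fun i => (-1 : ℤ) ^ i * (n.choose i : ℤ) * ((i + m).choose ℓ : ℤ)
        with hf
      set g : ℕ → ℤ := fun i => (-1 : ℤ) ^ i * (n.choose i : ℤ) * ((i + (m+1)).choose ℓ : ℤ)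
        with hg
      have h0 : ∀ i, F (i+1) = f (i+1) - g i := by
        intro i
        simp only [hF, hf, hg]
        rw [Nat.choose_succ_succ]
        have h1 : i + 1 + m = i + (m + 1) := by ring
        rw [h1]
        push_cast
        ring
      have key : ∑ i ∈ range (n + 2), F i
          = (∑ i ∈ range (n + 1), f i) - ∑ i ∈ range (n + 1), g i := by
        rw [Finset.sum_range_succ' F (n+1)]
        have hF0 : F 0 = f 0 := by simp [hF, hf]
        rw [Finset.sum_congr rfl (fun i _ => h0 i), Finset.sum_sub_distrib, hF0]
        have : (∑ i ∈ range (n + 1), f (i+1)) + f 0 = ∑ i ∈ range (n + 2), f i :=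
          (Finset.sum_range_succ' f (n+1)).symm
        have hfend : f (n+1) = 0 := by
          simp [hf, Nat.choose_succ_self]
        rw [sub_add_eq_add_sub, this, Finset.sum_range_succ f (n+1), hfend, add_zero]
      rw [key, ih m ℓ, ih (m+1) ℓ]
      by_cases h : n ≤ ℓ
      · rcases eq_or_lt_of_le h with rfl | hlt
        · simp [Nat.lt_irrefl, Nat.sub_self]
        · have h1 : n + 1 ≤ ℓ := hlt
          have h2 : ℓ - n = (ℓ - (n+1)) + 1 := by omega
          rw [if_pos h, if_pos h, if_pos h1, h2, Nat.choose_succ_succ]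
          push_cast
          ring
      · have h1 : ¬ (n + 1 ≤ ℓ) := by omega
        rw [if_neg h, if_neg h, if_neg h1, sub_zero]

/-- The key binomial identity behind `λ₀(slice) = b_n - n·b_{n+1}`:
here `(-1)^ℓ * C(j+ℓ-1, ℓ)` is the generalized binomial coefficient `C(-j, ℓ)`. -/
theorem stmt_4 (n ℓ : ℕ) (hn : 1 ≤ n) (hℓ : ℓ ≤ n + 1) :
    ∑ j ∈ Finset.range (n + 1),
      (-1 : ℤ) ^ j * (Nat.choose n j : ℤ) *
        ((-1 : ℤ) ^ ℓ * (Nat.choose (j + ℓ - 1) ℓ : ℤ))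
      = if ℓ = n then 1 else if ℓ = n + 1 then -(n : ℤ) else 0 := by
  rcases ℓ with _ | k
  · have hne : (0 : ℕ) ≠ n := by omega
    have hne2 : (0 : ℕ) ≠ n + 1 := by omega
    rw [if_neg hne, if_neg hne2]
    simp only [Nat.choose_zero_right, pow_zero, Nat.cast_one, one_mul, mul_one]
    rw [Int.alternating_sum_range_choose, if_neg (by omega : ¬ n = 0)]
  · have hj : ∀ j, j + (k + 1) - 1 = j + k := by intro j; omega
    have step : ∀ j, (-1 : ℤ) ^ j * (Nat.choose n j : ℤ) *
        ((-1 : ℤ) ^ (k+1) * (Nat.choose (j + (k+1) - 1) (k+1) : ℤ))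
        = (-1 : ℤ) ^ (k+1) * ((-1 : ℤ) ^ j * (Nat.choose n j : ℤ) * ((j + k).choose (k+1) : ℤ)) := by
      intro j
      rw [hj j]
      ring
    rw [Finset.sum_congr rfl (fun j _ => step j), ← Finset.mul_sum, aux_U n k (k+1)]
    by_cases h1 : k + 1 = n
    · rw [if_pos h1]
      have : n ≤ k + 1 := by omega
      rw [if_pos this]
      have : k + 1 - n = 0 := by omega
      rw [this, Nat.choose_zero_right]
      subst h1
      push_cast
      rw [mul_one, ← pow_add]
      exact Even.neg_one_pow ⟨k + 1, rfl⟩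
    · by_cases h2 : k + 1 = n + 1
      · rw [if_neg h1, if_pos h2]
        have hk : k = n := by omega
        subst hk
        rw [if_pos (Nat.le_succ k), (by omega : k + 1 - k = 1), Nat.choose_one_right,
          ← mul_assoc, ← pow_add, (by omega : k + 1 + k = 2 * k + 1), pow_succ, pow_mul]
        norm_num
      · rw [if_neg h1, if_neg h2]
        have : ¬ (n ≤ k + 1) := by omega
        rw [if_neg this, mul_zero]
end

section
/- Let A be an additive commutative group, n ≥ 1, and b_0, …, b_{n+1} ∈ A. Define f : ℤ → A by f(r) = Σ_{ℓ=0}^{n+1} C(r,ℓ)·b_ℓ, where C(r,ℓ) is the generalized binomial coefficient. Then Σ_{j=0}^{n} (−1)^j C(n,j)·f(−j) = b_n − n·b_{n+1}. -/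
open Finset Function fwdDiff

private lemma diff_choose_step (ℓ : ℕ) :
    Δ_[(-1 : ℤ)] (fun r : ℤ ↦ Ring.choose r (ℓ + 1)) =
      fun r : ℤ ↦ -Ring.choose (r - 1) ℓ := by
  ext r
  have h := Ring.choose_succ_succ (r - 1) ℓ
  rw [sub_add_cancel] at h
  simp only [fwdDiff]
  rw [show r + (-1) = r - 1 by ring, h]
  ring

private lemma diff_choose_iter (k : ℕ) : ∀ ℓ : ℕ, k ≤ ℓ →
    (Δ_[(-1 : ℤ)])^[k] (fun r : ℤ ↦ Ring.choose r ℓ) =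
      fun r : ℤ ↦ (-1) ^ k * Ring.choose (r - k) (ℓ - k) := by
  induction k with
  | zero => intro ℓ _; simp
  | succ k IH =>
    intro ℓ hk
    obtain ⟨m, rfl⟩ : ∃ m, ℓ = m + 1 := ⟨ℓ - 1, by omega⟩
    rw [iterate_succ_apply, diff_choose_step m]
    have hkm : k ≤ m := by omega
    have hneg : (fun r : ℤ ↦ -Ring.choose (r - 1) m)
        = (-1 : ℤ) • fun r : ℤ ↦ Ring.choose (r - 1) m := by
      ext r; simp
    rw [hneg, fwdDiff_iter_const_smul]
    have hshift : (Δ_[(-1 : ℤ)])^[k] (fun r : ℤ ↦ Ring.choose (r - 1) m)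
        = fun r : ℤ ↦ (-1) ^ k * Ring.choose (r - 1 - k) (m - k) := by
      have key : ∀ j : ℕ, (Δ_[(-1 : ℤ)])^[j] (fun r : ℤ ↦ Ring.choose (r - 1) m)
          = fun r : ℤ ↦ (Δ_[(-1 : ℤ)])^[j] (fun r : ℤ ↦ Ring.choose r m) (r - 1) := by
        intro j
        induction j with
        | zero => simp
        | succ j IHj =>
          rw [iterate_succ_apply', iterate_succ_apply', IHj]
          ext r
          simp only [fwdDiff]
          congr 2 <;> ring
      rw [key k, IH m hkm]
    rw [hshift]
    ext r
    simp only [Pi.smul_apply, smul_eq_mul]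
    have h1 : r - 1 - (k : ℤ) = r - (k + 1 : ℕ) := by push_cast; ring
    have h2 : m - k = m + 1 - (k + 1) := by omega
    rw [h1, h2]
    ring

private lemma diff_choose_iter_zero (k ℓ : ℕ) (h : ℓ < k) :
    (Δ_[(-1 : ℤ)])^[k] (fun r : ℤ ↦ Ring.choose r ℓ) = 0 := by
  obtain ⟨m, rfl⟩ : ∃ m, k = (ℓ + 1) + m := ⟨k - (ℓ + 1), by omega⟩
  rw [add_comm, iterate_add_apply, iterate_succ_apply',
    diff_choose_iter ℓ ℓ le_rfl]
  have h0 : Δ_[(-1 : ℤ)] (fun r : ℤ ↦ (-1) ^ ℓ * Ring.choose (r - ℓ) (ℓ - ℓ)) = 0 := by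
    ext r
    simp [fwdDiff, Nat.sub_self, Ring.choose_zero_right]
  rw [h0]
  clear h
  induction m with
  | zero => simp
  | succ m IHm =>
    rw [iterate_succ_apply,
      show Δ_[(-1 : ℤ)] (0 : ℤ → ℤ) = 0 by ext r; simp [fwdDiff], IHm]

private lemma diff_iter_smul_const {A : Type*} [AddCommGroup A] (c : ℤ → ℤ) (g : A) (k : ℕ) :
    (Δ_[(-1 : ℤ)])^[k] (fun r : ℤ ↦ c r • g) = fun r ↦ ((Δ_[(-1 : ℤ)])^[k] c r) • g := by
  induction k generalizing c with
  | zero => simp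
  | succ k IH =>
    rw [iterate_succ_apply, iterate_succ_apply]
    rw [show Δ_[(-1 : ℤ)] (fun r : ℤ ↦ c r • g) = fun r ↦ (Δ_[(-1 : ℤ)] c r) • g by
      ext r; simp [fwdDiff, sub_smul]]
    exact IH _

/-- If `f(r) = Σ_{ℓ=0}^{n+1} C(r,ℓ)·b_ℓ` (generalized binomial coefficients),
then `Σ_{j=0}^{n} (-1)^j C(n,j)·f(-j) = b_n - n·b_{n+1}`. -/
theorem stmt_16 (A : Type*) [AddCommGroup A] (n : ℕ) (hn : 1 ≤ n)
    (b : ℕ → A) (f : ℤ → A)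
    (hf : ∀ r : ℤ, f r = ∑ ℓ ∈ Finset.range (n + 2), Ring.choose r ℓ • b ℓ) :
    ∑ j ∈ Finset.range (n + 1),
        ((-1 : ℤ) ^ j * (Nat.choose n j : ℤ)) • f (-(j : ℤ))
      = b n - n • b (n + 1) := by
  set F : ℤ → A := ∑ ℓ ∈ Finset.range (n + 2), (fun r : ℤ ↦ Ring.choose r ℓ • b ℓ) with hF
  have hFapp : ∀ r : ℤ, F r = ∑ ℓ ∈ Finset.range (n + 2), Ring.choose r ℓ • b ℓ := by
    intro r; rw [hF, Finset.sum_apply]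
  -- Step 1: the alternating sum is (-1)^n • (n-th forward difference with step -1 at 0)
  have hmain : ∑ j ∈ Finset.range (n + 1),
      ((-1 : ℤ) ^ j * (Nat.choose n j : ℤ)) • f (-(j : ℤ))
      = ((-1 : ℤ) ^ n) • ((Δ_[(-1 : ℤ)])^[n] F 0) := by
    rw [fwdDiff_iter_eq_sum_shift (-1 : ℤ) F n 0, Finset.smul_sum]
    refine Finset.sum_congr rfl fun j hj ↦ ?_
    rw [Finset.mem_range] at hj
    have hjn : j ≤ n := by omega
    have harg : (0 : ℤ) + j • (-1 : ℤ) = -(j : ℤ) := by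
      simp [smul_eq_mul]
    rw [harg, hf, ← hFapp, smul_smul]
    congr 1
    have h1 : (-1 : ℤ) ^ n = (-1) ^ (n - j) * (-1) ^ j := by
      rw [← pow_add, Nat.sub_add_cancel hjn]
    have h2 : (-1 : ℤ) ^ (n - j) * (-1 : ℤ) ^ (n - j) = 1 := by
      rw [← pow_add]; exact Even.neg_one_pow ⟨n - j, rfl⟩
    rw [h1, show (-1 : ℤ) ^ (n - j) * (-1 : ℤ) ^ j * ((-1 : ℤ) ^ (n - j) * (Nat.choose n j : ℤ))
      = ((-1 : ℤ) ^ (n - j) * (-1 : ℤ) ^ (n - j)) * ((-1 : ℤ) ^ j * (Nat.choose n j : ℤ)) from by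
        ring, h2, one_mul]
  rw [hmain]
  -- Step 2: compute the n-th difference of F at 0
  have hdiff : (Δ_[(-1 : ℤ)])^[n] F 0
      = ((-1 : ℤ) ^ n) • b n + ((-1 : ℤ) ^ n * (-(n : ℤ))) • b (n + 1) := by
    rw [hF, fwdDiff_iter_finset_sum]
    rw [Finset.sum_apply]
    have hterm : ∀ ℓ : ℕ, (Δ_[(-1 : ℤ)])^[n] (fun r : ℤ ↦ Ring.choose r ℓ • b ℓ) 0
        = ((Δ_[(-1 : ℤ)])^[n] (fun r : ℤ ↦ Ring.choose r ℓ) 0) • b ℓ := by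
      intro ℓ; rw [diff_iter_smul_const]
    rw [show n + 2 = (n + 1) + 1 by ring, Finset.sum_range_succ, Finset.sum_range_succ]
    have hz : ∀ ℓ ∈ Finset.range n,
        (Δ_[(-1 : ℤ)])^[n] (fun r : ℤ ↦ Ring.choose r ℓ • b ℓ) 0 = 0 := by
      intro ℓ hℓ
      rw [Finset.mem_range] at hℓ
      rw [hterm, diff_choose_iter_zero n ℓ hℓ]
      simp
    rw [Finset.sum_eq_zero hz, zero_add, hterm, hterm,
      diff_choose_iter n n le_rfl, diff_choose_iter n (n + 1) (by omega)]
    simp only [Nat.sub_self, Nat.add_sub_cancel_left, zero_sub]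
    rw [Ring.choose_zero_right, Ring.choose_one_right]
    norm_num
  rw [hdiff, smul_add, smul_smul, smul_smul]
  have h2 : (-1 : ℤ) ^ n * (-1 : ℤ) ^ n = 1 := by
    rw [← pow_add]; exact Even.neg_one_pow ⟨n, rfl⟩
  rw [show (-1 : ℤ) ^ n * ((-1 : ℤ) ^ n * (-(n : ℤ))) = -(n : ℤ) by
    rw [← mul_assoc, h2, one_mul], h2, one_smul]
  rw [neg_smul, natCast_zsmul]
  exact (sub_eq_add_neg _ _).symm
end
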